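/- Let v ∈ N⊙(P,α) be a non-branching internal node lying on a segment s of the transition tree T of P. Then left(v) is also a node on the segment s. Furthermore, v is a relevant ⊙-transition node unless either (a) v is ⊙-dominated by top(s), or (b) first(right(v)) ⊆ first(top(s)) and top(s) is weakly ⊙-dominated by a ⊙-live node in T. -/

import Mathlib

/-- Non-empty regular expressions over alphabet `α`, identified with their parse trees. -/
inductive RE (α : Type) : Type where
  | eps : RE α
  | ch : α → RE α
  | cat : RE α → RE α → RE α
  | alt : RE α → RE α → RE α
  | star : RE α → RE α

/-- Child directions in the parse tree (a `star`-node only has an `L` child). -/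
inductive Dir : Type where
  | L : Dir
  | R : Dir
  deriving DecidableEq

/-- A node of the parse tree is identified with the path from the root to it. -/
abbrev TreePath : Type := List Dir

namespace RE

variable {α : Type}

/-- The subexpression of `R` rooted at the node reached by following path `v`
(`none` if no such node exists). -/
def sub : RE α → TreePath → Option (RE α)
  | r, [] => some r
  | .cat r _, .L :: p => sub r p
  | .cat _ s, .R :: p => sub s p
  | .alt r _, .L :: p => sub r p
  | .alt _ s, .R :: p => sub s p
  | .star r, .L :: p => sub r p
  | _, _ => none

/-- `v` is a node of the parse tree of `R`. -/
def IsNode (R : RE α) (v : TreePath) : Prop := ∃ r, R.sub v = some r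

/-- The label of a position (character leaf); `none` if `p` is not a position. -/
def labelOf (R : RE α) (p : TreePath) : Option α :=
  match R.sub p with
  | some (.ch a) => some a
  | _ => none

/-- `p` is a position of `R`, i.e. a leaf labeled by a character. -/
def IsPos (R : RE α) (p : TreePath) : Prop := ∃ a, R.labelOf p = some a

/-- `v` is a `⊙`-node (concatenation node). -/
def IsCatNode (R : RE α) (v : TreePath) : Prop := ∃ r s, R.sub v = some (.cat r s)

/-- `v` is a `∗`-node (Kleene-star node). -/
def IsStarNode (R : RE α) (v : TreePath) : Prop := ∃ r, R.sub v = some (.star r)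

/-- `PosSeq r w` holds when `w` is a sequence of (paths to) positions of `r`
whose labels spell some string of `L(r)`. -/
inductive PosSeq : RE α → List TreePath → Prop where
  | eps : PosSeq .eps []
  | ch (a : α) : PosSeq (.ch a) [[]]
  | cat {r s : RE α} {u v : List TreePath} : PosSeq r u → PosSeq s v →
      PosSeq (.cat r s) (u.map (Dir.L :: ·) ++ v.map (Dir.R :: ·))
  | altL {r s : RE α} {u : List TreePath} : PosSeq r u → PosSeq (.alt r s) (u.map (Dir.L :: ·))
  | altR {r s : RE α} {v : List TreePath} : PosSeq s v → PosSeq (.alt r s) (v.map (Dir.R :: ·))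
  | starNil {r : RE α} : PosSeq (.star r) []
  | starCons {r : RE α} {u w : List TreePath} : PosSeq r u → PosSeq (.star r) w →
      PosSeq (.star r) (u.map (Dir.L :: ·) ++ w)

/-- `first(v)`: the positions (as paths in `R`) that occur first in a position
sequence of the subexpression rooted at `v`. -/
def firstSet (R : RE α) (v : TreePath) : Set TreePath :=
  {p | ∃ r, R.sub v = some r ∧ ∃ p' w, PosSeq r (p' :: w) ∧ p = v ++ p'}

/-- `last(v)`: the positions (as paths in `R`) that occur last in a position
sequence of the subexpression rooted at `v`. -/
def lastSet (R : RE α) (v : TreePath) : Set TreePath :=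
  {p | ∃ r, R.sub v = some r ∧ ∃ w p', PosSeq r (w ++ [p']) ∧ p = v ++ p'}

/-- `follow(R,p)`: the positions that can follow `p` in a position sequence of `R`. -/
def followSet (R : RE α) (p : TreePath) : Set TreePath :=
  {q | ∃ w₁ w₂, PosSeq R (w₁ ++ p :: q :: w₂)}

/-- `firstextent(p) = {v : p ∈ first(v)}`. -/
def firstExtent (R : RE α) (p : TreePath) : Set TreePath := {v | p ∈ R.firstSet v}

/-- `lastextent(p) = {v : p ∈ last(v)}`. -/
def lastExtent (R : RE α) (p : TreePath) : Set TreePath := {v | p ∈ R.lastSet v}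

/-- `firstextent(P)` for a set of positions `P`. -/
def firstExtentSet (R : RE α) (P : Set TreePath) : Set TreePath := ⋃ p ∈ P, R.firstExtent p

/-- `lastextent(P)` for a set of positions `P`. -/
def lastExtentSet (R : RE α) (P : Set TreePath) : Set TreePath := ⋃ p ∈ P, R.lastExtent p

end RE

/-- Lowest common ancestor of two nodes = longest common prefix of the paths. -/
def lcaP : TreePath → TreePath → TreePath
  | a :: p, b :: q => if a = b then a :: lcaP p q else []
  | _, _ => []

namespace RE

variable {α : Type}

/-- `u = parent*(v)`: `u` is the lowest ancestor of `v` (possibly `v` itself)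
that is a `∗`-node. -/
def IsLowestStarAnc (R : RE α) (v u : TreePath) : Prop :=
  u <+: v ∧ R.IsStarNode u ∧ ∀ w, w <+: v → R.IsStarNode w → w <+: u

/-- `δ(p,α)`: the `α`-transitions of the position automaton out of position `p`. -/
def delta (R : RE α) (p : TreePath) (a : α) : Set TreePath :=
  {q | R.labelOf q = some a ∧ q ∈ R.followSet p}

/-- `δ(P,α) = ∪_{p ∈ P} δ(p,α)`. -/
def deltaSet (R : RE α) (P : Set TreePath) (a : α) : Set TreePath := ⋃ p ∈ P, R.delta p a

/-- Internal `⊙`-transition: `δ⊙(v,α) = {q ∈ Pos_α : right(v) ∈ firstextent(q)}`. -/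
def deltaOdot (R : RE α) (v : TreePath) (a : α) : Set TreePath :=
  {q | R.labelOf q = some a ∧ q ∈ R.firstSet (v ++ [Dir.R])}

/-- Internal `∗`-transition: `δ∗(v,α) = {q ∈ Pos_α : parent*(v) ∈ firstextent(q)}`. -/
def deltaStar (R : RE α) (v : TreePath) (a : α) : Set TreePath :=
  {q | R.labelOf q = some a ∧ ∃ u, R.IsLowestStarAnc v u ∧ q ∈ R.firstSet u}

/-- `N⊙(P,α)`: the `⊙`-transition nodes. -/
def NOdot (R : RE α) (P : Set TreePath) (a : α) : Set TreePath :=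
  {v | R.IsCatNode v ∧ (v ++ [Dir.L]) ∈ R.lastExtentSet P ∧
    (∃ q, R.labelOf q = some a ∧ q ∈ R.firstSet (v ++ [Dir.R]))}

/-- `N∗(P,α)`: the `∗`-transition nodes. -/
def NStar (R : RE α) (P : Set TreePath) (a : α) : Set TreePath :=
  {u | R.IsStarNode u ∧
    (∃ p ∈ P, ∃ q, R.labelOf q = some a ∧ R.IsLowestStarAnc (lcaP p q) u) ∧
    (∃ p ∈ P, p ∈ R.lastSet u) ∧ (∃ q, R.labelOf q = some a ∧ q ∈ R.firstSet u)}

/-- `u` `∗`-dominates `v`: `u` is a proper ancestor of `v` and `first(v) ⊆ first(u)`. -/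
def StarDom (R : RE α) (u v : TreePath) : Prop :=
  u <+: v ∧ u ≠ v ∧ R.firstSet v ⊆ R.firstSet u

/-- `u` `⊙`-dominates `v`: `u` is a proper ancestor of `v` and
`first(right(v)) ⊆ first(right(u))`. -/
def OdotDom (R : RE α) (u v : TreePath) : Prop :=
  u <+: v ∧ u ≠ v ∧ R.firstSet (v ++ [Dir.R]) ⊆ R.firstSet (u ++ [Dir.R])

/-- `Ñ⊙(P,α)`: the relevant `⊙`-transition nodes. -/
def RelNOdot (R : RE α) (P : Set TreePath) (a : α) : Set TreePath :=
  {v ∈ R.NOdot P a | ∀ u ∈ R.NOdot P a, ¬ R.OdotDom u v}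

/-- `Ñ∗(P,α)`: the relevant `∗`-transition nodes. -/
def RelNStar (R : RE α) (P : Set TreePath) (a : α) : Set TreePath :=
  {v ∈ R.NStar P a | ∀ u ∈ R.NStar P a, ¬ R.StarDom u v}

/-- `v` is a node of the transition tree `T` of `P`: an ancestor of some position of `P`. -/
def InT (R : RE α) (P : Set TreePath) (v : TreePath) : Prop := ∃ p ∈ P, v <+: p

/-- `v` is a branching node of the transition tree of `P`: both children are in `T`. -/
def Branching (R : RE α) (P : Set TreePath) (v : TreePath) : Prop :=
  R.InT P (v ++ [Dir.L]) ∧ R.InT P (v ++ [Dir.R])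

/-- `v` is a leaf of the transition tree of `P`. -/
def LeafT (R : RE α) (P : Set TreePath) (v : TreePath) : Prop :=
  R.InT P v ∧ ∀ d : Dir, ¬ R.InT P (v ++ [d])

/-- `v` is a `⊙`-live node: a `⊙`-node with `left(v) ∈ lastextent(P)`. -/
def OdotLive (R : RE α) (P : Set TreePath) (v : TreePath) : Prop :=
  R.IsCatNode v ∧ (v ++ [Dir.L]) ∈ R.lastExtentSet P

/-- `v` is weakly `⊙`-dominated by `u`: `u` is `⊙`-live, a proper ancestor of `v`,
and `first(v) ⊆ first(right(u))`. -/
def WeakOdotDom (R : RE α) (P : Set TreePath) (u v : TreePath) : Prop :=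
  R.OdotLive P u ∧ u <+: v ∧ u ≠ v ∧ R.firstSet v ⊆ R.firstSet (u ++ [Dir.R])

/-- The pair `(t, b)` delimits a segment of the transition tree of `P`: a path from a
leaf or branching node `b` up to the nearest branching node `t` strictly above it
(or to the root if there is none). -/
def IsSegment (R : RE α) (P : Set TreePath) (t b : TreePath) : Prop :=
  R.InT P b ∧ t <+: b ∧ t ≠ b ∧
  (R.LeafT P b ∨ R.Branching P b) ∧
  (R.Branching P t ∨ t = []) ∧
  (∀ w, t <+: w → w <+: b → w ≠ t → w ≠ b → ¬ R.Branching P w)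

/-- The language `L(R)`. -/
def lang : RE α → Set (List α)
  | .eps => {[]}
  | .ch a => {[a]}
  | .cat r s => {w | ∃ u ∈ lang r, ∃ v ∈ lang s, w = u ++ v}
  | .alt r s => lang r ∪ lang s
  | .star r => {w | ∃ l : List (List α), (∀ u ∈ l, u ∈ lang r) ∧ w = l.flatten}

/-- The position automaton (Glushkov automaton) of `R`: states are the positions of `R`
plus a start state `none`; for `q ∈ first(R)` there is a transition `(p₀, q, label(q))`,
and for `q ∈ follow(R,p)` a transition `(p, q, label(q))`; accepting states are
`last(R)`, together with `p₀` if `ε ∈ L(R)`. -/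
def posNFA (R : RE α) : NFA α (Option TreePath) where
  step := fun s a =>
    {t | ∃ q : TreePath, t = some q ∧ R.labelOf q = some a ∧
      ((s = none ∧ q ∈ R.firstSet []) ∨ (∃ p, s = some p ∧ q ∈ R.followSet p))}
  start := {none}
  accept := {t | (∃ p, t = some p ∧ p ∈ R.lastSet []) ∨ (t = none ∧ [] ∈ R.lang)}

end RE

/-!
A position `q ∈ first(w)` lying below a node `t` of the subtree of `w` shows that everything
between `w` and `t` that precedes `t` can spell the empty word; hence `q ∈ first(t)` and
`first(t) ⊆ first(w)`.

The left child of a `⊙`-live node is in `T`, so such a node strictly inside a segment cannot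
have its right child on the segment, or it would branch. This puts `left(v)` on the segment.
If `v` is not relevant, some `u ∈ N⊙(P,α)` `⊙`-dominates it, and a first position `q` of
`right(v)` lies below `right(u)`, so `right(u)` is an ancestor of `v`. By the above, `u` cannot
lie strictly between `t` and `v`; so either `u = t`, which is case (a), or `right(u)` is an
ancestor of `t`, and the first paragraph applied to `q ∈ first(right(u))` gives
`first(right(v)) ⊆ first(t) ⊆ first(right(u))`, which is case (b).
-/

namespace RE

variable {α : Type}

lemma sub_append (R : RE α) (x y : TreePath) :
    R.sub (x ++ y) = (R.sub x).bind (·.sub y) := by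
  induction x generalizing R with
  | nil => simp [sub]
  | cons d x ih => cases R <;> cases d <;> simp [sub, ih]

lemma IsNode.of_prefix {R : RE α} {x y : TreePath} (h : R.IsNode y) (hxy : x <+: y) :
    R.IsNode x := by
  obtain ⟨r, hr⟩ := h
  obtain ⟨z, rfl⟩ := hxy
  rw [sub_append] at hr
  cases hx : R.sub x with
  | none => simp [hx] at hr
  | some r₁ => exact ⟨r₁, hx⟩

def IsFirst (r : RE α) (p : TreePath) : Prop := ∃ w, PosSeq r (p :: w)

lemma isFirst_child {r r' : RE α} {d : Dir} {p : TreePath} (h : r.sub [d] = some r')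
    (hp : r.IsFirst (d :: p)) : r'.IsFirst p ∧ ∀ q, r'.IsFirst q → r.IsFirst (d :: q) := by
  obtain ⟨ws, hws⟩ := hp
  generalize hl : (d :: p) :: ws = l at hws
  induction hws generalizing ws with
  | eps | ch | starNil => simp at hl
  | @cat r s u v hu hv =>
    rcases u with _ | ⟨u₀, u⟩
    · rcases v with _ | ⟨v₀, v⟩
      · simp at hl
      · simp only [List.map_nil, List.nil_append, List.map_cons, List.cons.injEq] at hl
        obtain ⟨⟨rfl, rfl⟩, rfl⟩ := hl
        simp only [sub, Option.some.injEq] at h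
        subst h
        exact ⟨⟨v, hv⟩, fun q ⟨qs, hq⟩ => ⟨qs.map (Dir.R :: ·), PosSeq.cat (u := []) hu hq⟩⟩
    · simp only [List.map_cons, List.cons_append, List.cons.injEq] at hl
      obtain ⟨⟨rfl, rfl⟩, rfl⟩ := hl
      simp only [sub, Option.some.injEq] at h
      subst h
      exact ⟨⟨u, hu⟩, fun q ⟨qs, hq⟩ => ⟨_, PosSeq.cat (u := q :: qs) hq hv⟩⟩
  | @altL r s u hu =>
    rcases u with _ | ⟨u₀, u⟩
    · simp at hl
    · simp only [List.map_cons, List.cons.injEq] at hl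
      obtain ⟨⟨rfl, rfl⟩, rfl⟩ := hl
      simp only [sub, Option.some.injEq] at h
      subst h
      exact ⟨⟨u, hu⟩, fun q ⟨qs, hq⟩ => ⟨_, PosSeq.altL (s := s) (u := q :: qs) hq⟩⟩
  | @altR r s u hu =>
    rcases u with _ | ⟨u₀, u⟩
    · simp at hl
    · simp only [List.map_cons, List.cons.injEq] at hl
      obtain ⟨⟨rfl, rfl⟩, rfl⟩ := hl
      simp only [sub, Option.some.injEq] at h
      subst h
      exact ⟨⟨u, hu⟩, fun q ⟨qs, hq⟩ => ⟨_, PosSeq.altR (r := r) (v := q :: qs) hq⟩⟩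
  | @starCons r u w hu _ _ ihw =>
    rcases u with _ | ⟨u₀, u⟩
    · exact ihw h ws (by simpa using hl)
    · simp only [List.map_cons, List.cons_append, List.cons.injEq] at hl
      obtain ⟨⟨rfl, rfl⟩, rfl⟩ := hl
      simp only [sub, Option.some.injEq] at h
      subst h
      exact ⟨⟨u, hu⟩, fun q ⟨qs, hq⟩ =>
        ⟨qs.map (Dir.L :: ·), by simpa using PosSeq.starCons hq PosSeq.starNil⟩⟩

lemma isFirst_descendant {r r' : RE α} {c p : TreePath} (h : r.sub c = some r')
    (hp : r.IsFirst (c ++ p)) : r'.IsFirst p ∧ ∀ q, r'.IsFirst q → r.IsFirst (c ++ q) := by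
  induction c generalizing r with
  | nil =>
    simp only [sub, Option.some.injEq] at h
    subst h
    exact ⟨hp, fun _ hq => hq⟩
  | cons d c ih =>
    rw [show d :: c = [d] ++ c from rfl, sub_append] at h
    obtain ⟨r₁, h₁, h₂⟩ := Option.bind_eq_some_iff.mp h
    obtain ⟨hp₁, lift₁⟩ := isFirst_child h₁ hp
    obtain ⟨hp', lift⟩ := ih h₂ hp₁
    exact ⟨hp', fun q hq => lift₁ _ (lift q hq)⟩

lemma prefix_of_mem_firstSet {R : RE α} {w q : TreePath} (h : q ∈ R.firstSet w) : w <+: q := by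
  obtain ⟨r, -, p, ws, -, rfl⟩ := h
  exact List.prefix_append w p

lemma mem_firstSet_and_firstSet_subset {R : RE α} {w t q : TreePath} (ht : R.IsNode t)
    (hwt : w <+: t) (htq : t <+: q) (hq : q ∈ R.firstSet w) :
    q ∈ R.firstSet t ∧ R.firstSet t ⊆ R.firstSet w := by
  obtain ⟨rw, hrw, p, ws, hps, rfl⟩ := hq
  obtain ⟨rt, hrt⟩ := ht
  obtain ⟨c, rfl⟩ := hwt
  obtain ⟨s, hs⟩ := htq
  obtain rfl : p = c ++ s := by simpa using hs.symm
  have hc : rw.sub c = some rt := by simpa [sub_append, hrw] using hrt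
  obtain ⟨⟨ws', hs⟩, lift⟩ := isFirst_descendant hc ⟨ws, hps⟩
  refine ⟨⟨rt, hrt, s, ws', hs, by simp⟩, ?_⟩
  rintro _ ⟨rt', hrt', p', ws'', hp', rfl⟩
  obtain rfl : rt' = rt := by simpa [hrt] using hrt'.symm
  obtain ⟨qs, hqs⟩ := lift p' ⟨ws'', hp'⟩
  exact ⟨rw, hrw, c ++ p', qs, hqs, by simp⟩

lemma firstSet_subset_of_between {R : RE α} {w t x : TreePath} (ht : R.IsNode t)
    (hwt : w <+: t) (htx : t <+: x) (hsub : R.firstSet x ⊆ R.firstSet w)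
    (hne : (R.firstSet x).Nonempty) :
    R.firstSet x ⊆ R.firstSet t ∧ R.firstSet t ⊆ R.firstSet w := by
  obtain ⟨q, hq⟩ := hne
  refine ⟨fun y hy => ?_, ?_⟩
  · exact (mem_firstSet_and_firstSet_subset ht hwt
      (htx.trans (prefix_of_mem_firstSet hy)) (hsub hy)).1
  · exact (mem_firstSet_and_firstSet_subset ht hwt
      (htx.trans (prefix_of_mem_firstSet hq)) (hsub hq)).2

lemma InT.of_prefix {R : RE α} {P : Set TreePath} {x y : TreePath} (h : R.InT P y)
    (hxy : x <+: y) : R.InT P x := by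
  obtain ⟨p, hp, hyp⟩ := h
  exact ⟨p, hp, hxy.trans hyp⟩

lemma InT.of_mem_lastExtentSet {R : RE α} {P : Set TreePath} {x : TreePath}
    (h : x ∈ R.lastExtentSet P) : R.InT P x := by
  simp only [lastExtentSet, Set.mem_iUnion] at h
  obtain ⟨p, hp, -, -, w, p', -, rfl⟩ := h
  exact ⟨_, hp, List.prefix_append x p'⟩

end RE

lemma List.append_singleton_prefix_of_prefix {α : Type*} {u y q : List α} {d : α}
    (huy : u <+: y) (hne : u ≠ y) (hyq : y <+: q) (h : u ++ [d] <+: q) : u ++ [d] <+: y := by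
  refine List.prefix_of_prefix_length_le h hyq ?_
  have := huy.length_le
  have := mt huy.eq_of_length hne
  simp only [List.length_append, List.length_singleton]
  omega

lemma List.exists_append_singleton_prefix {α : Type*} {u y : List α} (huy : u <+: y)
    (hne : u ≠ y) : ∃ d, u ++ [d] <+: y := by
  obtain ⟨_ | ⟨d, z⟩, rfl⟩ := huy
  · simp at hne
  · exact ⟨d, z, by simp⟩

namespace RE.IsSegment

variable {α : Type} {R : RE α} {P : Set TreePath} {t b u : TreePath}

lemma not_right_prefix (hseg : R.IsSegment P t b) (hu : u ++ [Dir.L] ∈ R.lastExtentSet P)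
    (htu : t <+: u) (hut : u ≠ t) : ¬ u ++ [Dir.R] <+: b := by
  intro huR
  obtain ⟨hb, -, -, -, -, hinner⟩ := hseg
  have hub : u ≠ b := by
    rintro rfl
    simpa using huR.length_le
  exact hinner u htu ((List.prefix_append u _).trans huR) hut hub
    ⟨InT.of_mem_lastExtentSet hu, hb.of_prefix huR⟩

lemma left_prefix (hseg : R.IsSegment P t b) (hu : u ++ [Dir.L] ∈ R.lastExtentSet P)
    (htu : t <+: u) (hut : u ≠ t) (hub : u <+: b) (hub' : u ≠ b) : u ++ [Dir.L] <+: b := by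
  obtain ⟨_ | _, hd⟩ := List.exists_append_singleton_prefix hub hub'
  · exact hd
  · exact absurd hd (hseg.not_right_prefix hu htu hut)

end RE.IsSegment

theorem segment_internal_node_relevant_general {α : Type} (R : RE α) (P : Set TreePath)
    (a : α) (t b v : TreePath)
    (hseg : R.IsSegment P t b) (hv : v ∈ R.NOdot P a)
    (htv : t <+: v) (hvb : v <+: b) (hvt : v ≠ t) (hvb' : v ≠ b) :
    (v ++ [Dir.L]) <+: b ∧
    (v ∈ R.RelNOdot P a ∨ R.OdotDom t v ∨
      (R.firstSet (v ++ [Dir.R]) ⊆ R.firstSet t ∧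
        ∃ u, R.InT P u ∧ R.WeakOdotDom P u t)) := by
  refine ⟨hseg.left_prefix hv.2.1 htv hvt hvb hvb', ?_⟩
  by_cases hrel : v ∈ R.RelNOdot P a
  · exact Or.inl hrel
  obtain ⟨u, ⟨hucat, hulive, -⟩, huv, hvu, hdom⟩ : ∃ u ∈ R.NOdot P a, R.OdotDom u v := by
    simpa [RE.RelNOdot, hv] using hrel
  obtain ⟨⟨_, _, hvcat⟩, -, q, -, hq⟩ := hv
  have hvq : v <+: q := (List.prefix_append v _).trans (RE.prefix_of_mem_firstSet hq)
  have huq : u ++ [Dir.R] <+: q := RE.prefix_of_mem_firstSet (hdom hq)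
  rcases eq_or_ne u t with rfl | hut
  · exact Or.inr (Or.inl ⟨huv, hvu, hdom⟩)
  rcases List.prefix_or_prefix_of_prefix huv htv with hut' | htu
  · have huRt := List.append_singleton_prefix_of_prefix hut' hut (htv.trans hvq) huq
    have ht : R.IsNode t := RE.IsNode.of_prefix ⟨_, hvcat⟩ htv
    obtain ⟨hvRt, htuR⟩ := RE.firstSet_subset_of_between ht huRt
      (htv.trans (List.prefix_append v _)) hdom ⟨q, hq⟩
    exact Or.inr (Or.inr ⟨hvRt, u, hseg.1.of_prefix (hut'.trans (htv.trans hvb)),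
      ⟨hucat, hulive⟩, hut', hut, htuR⟩)
  · exact absurd ((List.append_singleton_prefix_of_prefix huv hvu hvq huq).trans hvb)
      (hseg.not_right_prefix hulive htu hut)

/-- Let `v ∈ N⊙(P,α)` be a non-branching internal node lying (strictly) on a segment
`s` of the transition tree `T` of `P` with top node `t` and bottom node `b`. Then
`left(v)` is also a node on the segment `s`; furthermore `v` is a relevant
`⊙`-transition node unless either (a) `v` is `⊙`-dominated by `top(s) = t`, or (b)
`first(right(v)) ⊆ first(top(s))` and `top(s)` is weakly `⊙`-dominated by a `⊙`-live
node in `T`. -/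
theorem segment_internal_node_relevant {α : Type} (R : RE α) (P : Set TreePath)
    (a : α) (hP : ∀ p ∈ P, R.IsPos p) (t b v : TreePath)
    (hseg : R.IsSegment P t b) (hv : v ∈ R.NOdot P a)
    (htv : t <+: v) (hvb : v <+: b) (hvt : v ≠ t) (hvb' : v ≠ b) :
    (v ++ [Dir.L]) <+: b ∧
    (v ∈ R.RelNOdot P a ∨ R.OdotDom t v ∨
      (R.firstSet (v ++ [Dir.R]) ⊆ R.firstSet t ∧
        ∃ u, R.InT P u ∧ R.WeakOdotDom P u t)) :=
  segment_internal_node_relevant_general R P a t b v hseg hv htv hvb hvt hvb'
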